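/- Let D be a real graded division algebra with D_e ≅ ℂ, K ≠ T, and a degree-preserving involution φ_0 restricting to conjugation on D_e, with T an elementary 2-group and normalized elements X_t with X_t² = μ(t) ∈ {±1}. Extend β to T × K by X_u X_t = β(u,t) X_t X_u. Then β takes values in {±1} on T × K, is multiplicative in the first variable, and satisfies β(u,t) = μ(ut)μ(u)μ(t) = η(ut)η(u)δ for all u ∈ T∖K and t ∈ K. In particular, if η and μ coincide on T∖K then they coincide on all of T. -/

import Mathlib

/-!
For `u ∉ K`, conjugation by `X_u` maps `D_e` into itself. Since `D_e` is commutative and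
`z + φ₀ z`, `z φ₀ z` are real, `X_u z X_u⁻¹` is, like `z`, a root of the central quadratic
`T² - (z + φ₀ z) T + z φ₀ z = (T - z)(T - φ₀ z)`; nonzero elements of `D_e` being invertible,
`X_u z X_u⁻¹ ∈ {z, φ₀ z}`, and testing on `z + z₀` with `X_u z₀ ≠ z₀ X_u` shows that
`X_u z = φ₀(z) X_u` for every `z ∈ D_e`.

For `t ∈ K`, `β(u,t) = μ(u)μ(t)(X_u X_t)²` lies in `D_e` and commutes with `X_t`, and comparing
`X_u X_t²` with `β² X_t² X_u` gives `β² = 1`, hence `β = ±1`; multiplicativity in `u` comes from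
`X_{uv} ∈ D_e X_u X_v`, as `D_e` commutes with `X_t`. For `u ∉ K` write
`X_u X_t = d X_{ut}` with `d ∈ D_e`; then `ut ∉ K`, so `(X_u X_t)² = d φ₀(d) μ(ut)` with
`d φ₀(d) ≥ 0`, which forces `β = μ(ut)μ(u)μ(t)`, and applying `φ₀` to `X_u X_t = d X_{ut}` gives
`δ η(u) β = η(ut)`.
-/

variable {G : Type*} [CommGroup G] [DecidableEq G] {D : Type*} [Ring D] [Algebra ℝ D]

/-- A real graded division algebra. -/
def IsGDA (comp : G → Submodule ℝ D) : Prop :=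
  DirectSum.IsInternal comp ∧ (1 : D) ∈ comp 1 ∧
    (∀ (g h : G) (a b : D), a ∈ comp g → b ∈ comp h → a * b ∈ comp (g * h)) ∧
    ∀ (g : G) (a : D), a ∈ comp g → a ≠ 0 → IsUnit a

/-- `t` belongs to `K`, i.e. `Int(X_t)` restricts to the identity on `D_e`. -/
def Kmem (comp : G → Submodule ℝ D) {T : Subgroup G} (X : ↥T → Dˣ) (t : ↥T) : Prop :=
  ∀ z ∈ comp (1 : G), (X t : D) * z = z * (X t : D)

section Ring

variable {R : Type*} [Ring R]

theorem conj_sub_mul_conj_sub_eq_zero {x : Rˣ} {z z' : R} (hzz' : Commute z z')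
    (hsum : ∀ a, Commute (z + z') a) (hprod : ∀ a, Commute (z * z') a)
    (hz' : Commute (x * z * ↑x⁻¹) z') :
    (x * z * ↑x⁻¹ - z) * (x * z * ↑x⁻¹ - z') = 0 := by
  set y := (x : R) * z * ↑x⁻¹ with hy
  have hroot : z * z - (z + z') * z + z * z' = 0 := by
    rw [add_mul, hzz'.eq]; abel
  have hyy : y * y = x * (z * z) * ↑x⁻¹ := by
    simp only [hy, mul_assoc, Units.inv_mul_cancel_left]
  have hsumy : (z + z') * y = x * ((z + z') * z) * ↑x⁻¹ := by
    simp only [hy, ← mul_assoc, (hsum x).eq]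
  have hprody : z * z' = x * (z * z') * ↑x⁻¹ := by
    rw [← (hprod x).eq, mul_assoc, Units.mul_inv, mul_one]
  calc (y - z) * (y - z') = y * y - (z + z') * y + z * z' := by
        rw [sub_mul, mul_sub, mul_sub, add_mul, hz'.eq]; abel
    _ = x * (z * z - (z + z') * z + z * z') * ↑x⁻¹ := by
        conv_lhs => rw [hyy, hsumy, hprody]
        simp only [mul_add, mul_sub, add_mul, sub_mul]
    _ = 0 := by rw [hroot, mul_zero, zero_mul]

theorem forall_mul_eq_apply_mul_of_forall_or {F S : Type*} [FunLike F R R] [AddHomClass F R R]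
    [SetLike S R] [AddMemClass S R] (φ : F) (s : S) {x : R}
    (h : ∀ z ∈ s, x * z = z * x ∨ x * z = φ z * x) (hx : ∃ z₀ ∈ s, x * z₀ ≠ z₀ * x) :
    ∀ z ∈ s, x * z = φ z * x := by
  obtain ⟨z₀, hz₀s, hz₀⟩ := hx
  have hφz₀ : x * z₀ = φ z₀ * x := (h z₀ hz₀s).resolve_left hz₀
  intro z hz
  refine (h z hz).elim (fun hzx => ?_) id
  rcases h (z + z₀) (add_mem hz hz₀s) with hsum | hsum
  · rw [mul_add, add_mul, hzx, hφz₀, add_right_inj] at hsum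
    exact absurd (hφz₀.trans hsum) hz₀
  · rw [mul_add, map_add, add_mul, hzx, hφz₀, add_left_inj] at hsum
    exact hzx.trans hsum

theorem mul_self_eq_one_of_mul_eq_mul_mul {x y : Rˣ} {b : R} (hxy : (x * y : R) = b * (y * x))
    (hyb : Commute (y : R) b) (hyy : ∀ a, Commute (y * y : R) a) : b * b = 1 := by
  have h : 1 * ((y * y : R) * x) = b * b * ((y * y : R) * x) :=
    calc 1 * ((y * y : R) * x) = x * y * y := by rw [one_mul, (hyy x).eq, mul_assoc]
      _ = b * (y * (b * (y * x))) := by rw [hxy, mul_assoc, mul_assoc, ← hxy]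
      _ = b * b * ((y * y : R) * x) := by rw [← mul_assoc (y : R), hyb.eq]; simp only [mul_assoc]
  exact ((y * y * x).isUnit.mul_left_inj.mp (by simpa using h)).symm

theorem mul_mul_eq_mul_mul_of_mul_eq_mul_mul {e x x' y b b' : R} (hxy : x * y = b * (y * x))
    (hx'y : x' * y = b' * (y * x')) (hey : Commute e y) (hb : ∀ a, Commute b a)
    (hb' : ∀ a, Commute b' a) : e * (x * x') * y = b * b' * (y * (e * (x * x'))) :=
  calc e * (x * x') * y = e * (x * (b' * (y * x'))) := by rw [mul_assoc, mul_assoc, hx'y]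
    _ = b' * (e * (b * (y * (x * x')))) := by
        rw [(hb' x).symm.left_comm, (hb' e).symm.left_comm, ← mul_assoc x, hxy]
        simp only [mul_assoc]
    _ = b * b' * (y * (e * (x * x'))) := by
        rw [(hb e).symm.left_comm, ← hey.left_comm, (hb' b).left_comm, mul_assoc]

end Ring

section Algebra

variable {A : Type*} [Ring A]

theorem Units.val_inv_mem_of_mul_self_eq_algebraMap {𝕜 : Type*} [Field 𝕜] [Algebra 𝕜 A]
    {p : Submodule 𝕜 A} {x : Aˣ} {r : 𝕜} (hxp : (x : A) ∈ p)
    (hx : (x * x : A) = algebraMap 𝕜 A r) (hr : r ≠ 0) : ((x⁻¹ : Aˣ) : A) ∈ p := by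
  rw [Units.inv_eq_of_mul_eq_one_right (a := r⁻¹ • (x : A))]
  · exact p.smul_mem _ hxp
  · rw [mul_smul_comm, hx, Algebra.smul_def, ← map_mul, inv_mul_cancel₀ hr, map_one]

theorem mul_mul_self_eq_of_mul_eq_mul_mul {𝕜 : Type*} [CommSemiring 𝕜] [Algebra 𝕜 A]
    {x y b : A} {m n : 𝕜} (hxy : x * y = b * (y * x)) (hx : x * x = algebraMap 𝕜 A m)
    (hy : y * y = algebraMap 𝕜 A n) : x * y * (x * y) = b * algebraMap 𝕜 A (m * n) :=
  calc x * y * (x * y) = b * (y * x) * (x * y) := by rw [← hxy]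
    _ = b * (y * (x * x) * y) := by simp only [mul_assoc]
    _ = b * algebraMap 𝕜 A (m * n) := by
        rw [hx, ← Algebra.commutes, mul_assoc, hy, map_mul]

variable [Algebra ℝ A]

theorem sign_eq_mul_mul_of_mul_self [Nontrivial A] {x y z d d' : A} {c m n k r : ℝ}
    (hxy : x * y = algebraMap ℝ A c * (y * x)) (hx : x * x = algebraMap ℝ A m)
    (hy : y * y = algebraMap ℝ A n) (hz : z * z = algebraMap ℝ A k) (hxyz : x * y = d * z)
    (hzd : z * d = d' * z) (hdd' : d * d' = algebraMap ℝ A r) (hr : 0 ≤ r)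
    (hc : c = 1 ∨ c = -1) (hm : m = 1 ∨ m = -1) (hn : n = 1 ∨ n = -1) (hk : k = 1 ∨ k = -1) :
    c = k * m * n := by
  have hsq : algebraMap ℝ A (c * (m * n)) = algebraMap ℝ A (r * k) :=
    calc algebraMap ℝ A (c * (m * n)) = x * y * (x * y) := by
          rw [mul_mul_self_eq_of_mul_eq_mul_mul hxy hx hy, map_mul]
      _ = d * (z * d) * z := by rw [hxyz]; simp only [mul_assoc]
      _ = algebraMap ℝ A (r * k) := by
          rw [hzd, ← mul_assoc, hdd', mul_assoc, hz, map_mul]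
  have h := (algebraMap ℝ A).injective hsq
  rcases hc with rfl | rfl <;> rcases hm with rfl | rfl <;> rcases hn with rfl | rfl <;>
    rcases hk with rfl | rfl <;> linarith

theorem sign_eq_mul_mul_of_anti (φ : A → A) (hanti : ∀ a b, φ (a * b) = φ b * φ a)
    {x y z d : A} {a a' e c : ℝ} (hxy : x * y = algebraMap ℝ A c * (y * x))
    (hφx : φ x = a • x) (hφy : φ y = a' • y) (hφz : φ z = e • z) (hxyz : x * y = d * z)
    (hzd : z * φ d = d * z) (hxy0 : x * y ≠ 0)
    (hc : c = 1 ∨ c = -1) (ha : a = 1 ∨ a = -1) (ha' : a' = 1 ∨ a' = -1) :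
    c = e * a * a' := by
  have hyx : y * x = c • (x * y) := by
    rw [hxy, Algebra.smul_def, ← mul_assoc, ← map_mul]
    rcases hc with rfl | rfl <;> norm_num
  have h : (a' * a * c) • (x * y) = e • (x * y) :=
    calc (a' * a * c) • (x * y) = φ (x * y) := by
          rw [hanti, hφx, hφy, smul_mul_smul_comm, hyx, smul_smul]
      _ = e • (x * y) := by rw [hxyz, hanti, hφz, smul_mul_assoc, hzd]
  have h' := smul_left_injective ℝ hxy0 h
  rcases hc with rfl | rfl <;> rcases ha with rfl | rfl <;> rcases ha' with rfl | rfl <;>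
    linarith

end Algebra

namespace IsGDA

variable {comp : G → Submodule ℝ D}

theorem one_mem (hgda : IsGDA comp) : (1 : D) ∈ comp 1 := hgda.2.1

theorem mul_mem (hgda : IsGDA comp) {g h : G} {a b : D} (ha : a ∈ comp g) (hb : b ∈ comp h) :
    a * b ∈ comp (g * h) :=
  hgda.2.2.1 g h a b ha hb

theorem eq_zero_or_eq_zero_of_mul_eq_zero (hgda : IsGDA comp) {g : G} {a b : D}
    (ha : a ∈ comp g) (hab : a * b = 0) : a = 0 ∨ b = 0 :=
  or_iff_not_imp_left.mpr fun ha0 => (hgda.2.2.2 g a ha ha0).mul_right_eq_zero.mp hab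

theorem exists_mem_one_mul_eq (hgda : IsGDA comp) {g : G} {x : Dˣ} {y : D} (hy : y ∈ comp g)
    (hx : ((x⁻¹ : Dˣ) : D) ∈ comp g⁻¹) : ∃ e ∈ comp 1, y = e * x :=
  ⟨y * ↑x⁻¹, by simpa using hgda.mul_mem hy hx, by simp⟩

theorem conj_mem_one (hgda : IsGDA comp) {g : G} {x : Dˣ} (hx : (x : D) ∈ comp g)
    (hx' : ((x⁻¹ : Dˣ) : D) ∈ comp g⁻¹) {z : D} (hz : z ∈ comp 1) : x * z * ↑x⁻¹ ∈ comp 1 := by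
  simpa using hgda.mul_mem (hgda.mul_mem hx hz) hx'

theorem mul_eq_apply_mul_of_not_commute (hgda : IsGDA comp)
    (hcomm : ∀ z ∈ comp (1 : G), ∀ w ∈ comp (1 : G), z * w = w * z)
    {F : Type*} [FunLike F D D] [AddHomClass F D D] (φ : F)
    (hφ : ∀ z ∈ comp (1 : G), φ z ∈ comp 1)
    (hsum : ∀ z ∈ comp (1 : G), ∃ r : ℝ, z + φ z = algebraMap ℝ D r)
    (hprod : ∀ z ∈ comp (1 : G), ∃ r : ℝ, z * φ z = algebraMap ℝ D r)
    {g : G} {x : Dˣ} (hx : (x : D) ∈ comp g) (hx' : ((x⁻¹ : Dˣ) : D) ∈ comp g⁻¹)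
    (hnc : ∃ z ∈ comp (1 : G), (x : D) * z ≠ z * x) :
    ∀ z ∈ comp (1 : G), (x : D) * z = φ z * x := by
  refine forall_mul_eq_apply_mul_of_forall_or φ (comp 1) (fun z hz => ?_) hnc
  have hy := hgda.conj_mem_one hx hx' hz
  obtain ⟨r, hr⟩ := hsum z hz
  obtain ⟨s, hs⟩ := hprod z hz
  have hroots := conj_sub_mul_conj_sub_eq_zero (hcomm z hz _ (hφ z hz))
    (hr ▸ Algebra.commute_algebraMap_left r) (hs ▸ Algebra.commute_algebraMap_left s)
    (hcomm _ hy _ (hφ z hz))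
  rcases hgda.eq_zero_or_eq_zero_of_mul_eq_zero (sub_mem hy hz) hroots with h | h
  · exact Or.inl ((Units.mul_inv_eq_iff_eq_mul x).mp (sub_eq_zero.mp h))
  · exact Or.inr ((Units.mul_inv_eq_iff_eq_mul x).mp (sub_eq_zero.mp h))

end IsGDA

section Normalized

variable {comp : G → Submodule ℝ D} {T : Subgroup G} {X : ↥T → Dˣ}

theorem exists_mem_one_X_mul_eq (hgda : IsGDA comp) (hX : ∀ t : ↥T, (X t : D) ∈ comp (t : G))
    (hXinv : ∀ t : ↥T, (((X t)⁻¹ : Dˣ) : D) ∈ comp (t : G)⁻¹) (u v : ↥T) :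
    ∃ e ∈ comp 1, (X (u * v) : D) = e * (X u * X v) := by
  simpa using hgda.exists_mem_one_mul_eq (x := X u * X v) (hX (u * v))
    (by simpa [mul_inv_rev] using hgda.mul_mem (hXinv v) (hXinv u))

theorem kmem_mul (hgda : IsGDA comp)
    (hcomm : ∀ z ∈ comp (1 : G), ∀ w ∈ comp (1 : G), z * w = w * z)
    (hX : ∀ t : ↥T, (X t : D) ∈ comp (t : G))
    (hXinv : ∀ t : ↥T, (((X t)⁻¹ : Dˣ) : D) ∈ comp (t : G)⁻¹) {a b : ↥T}
    (ha : Kmem comp X a) (hb : Kmem comp X b) : Kmem comp X (a * b) := by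
  obtain ⟨e, he, hXab⟩ := exists_mem_one_X_mul_eq hgda hX hXinv a b
  intro z hz
  rw [hXab]
  exact Commute.mul_left (hcomm e he z hz) (Commute.mul_left (ha z hz) (hb z hz))

theorem not_kmem_mul (hgda : IsGDA comp)
    (hcomm : ∀ z ∈ comp (1 : G), ∀ w ∈ comp (1 : G), z * w = w * z)
    (hX : ∀ t : ↥T, (X t : D) ∈ comp (t : G))
    (hXinv : ∀ t : ↥T, (((X t)⁻¹ : Dˣ) : D) ∈ comp (t : G)⁻¹) {u t : ↥T} (htt : t * t = 1)
    (hu : ¬Kmem comp X u) (ht : Kmem comp X t) : ¬Kmem comp X (u * t) := fun hut =>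
  hu (by simpa [mul_assoc, htt] using kmem_mul hgda hcomm hX hXinv hut ht)

theorem eq_one_or_eq_neg_one_of_kmem (hgda : IsGDA comp)
    (hX : ∀ t : ↥T, (X t : D) ∈ comp (t : G)) (h2 : ∀ t : ↥T, (t : G) * t = 1)
    {μ : ↥T → ℝ} (hμ : ∀ t : ↥T, μ t = 1 ∨ μ t = -1)
    (hXsq : ∀ t : ↥T, (X t : D) * (X t : D) = algebraMap ℝ D (μ t)) {u t : ↥T} {b : D}
    (ht : Kmem comp X t) (hb : (X u : D) * X t = b * (X t * X u)) : b = 1 ∨ b = -1 := by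
  have hm : algebraMap ℝ D (μ u * μ t) * algebraMap ℝ D (μ u * μ t) = 1 := by
    rw [← map_mul]
    rcases hμ u with h | h <;> rcases hμ t with h' | h' <;> simp [h, h']
  have hbmem : b ∈ comp 1 := by
    have hP := hgda.mul_mem (hX u) (hX t)
    have hPP : (u * t : G) * (u * t) = 1 := h2 (u * t)
    have hb' : b = (μ u * μ t) • (X u * X t * (X u * X t) : D) := by
      rw [mul_mul_self_eq_of_mul_eq_mul_mul hb (hXsq u) (hXsq t), Algebra.smul_def,
        ← Algebra.commutes, ← mul_assoc, hm, one_mul]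
    rw [hb']
    exact (comp 1).smul_mem _ (hPP ▸ hgda.mul_mem hP hP)
  have hbb : b * b = 1 := mul_self_eq_one_of_mul_eq_mul_mul hb (ht b hbmem)
    (fun a => hXsq t ▸ Algebra.commute_algebraMap_left _ a)
  have hroots : (b - 1) * (b + 1) = 0 := by
    rw [sub_mul, mul_add, mul_add, hbb, mul_one, one_mul, mul_one]; abel
  rcases hgda.eq_zero_or_eq_zero_of_mul_eq_zero (sub_mem hbmem hgda.one_mem) hroots with h | h
  · exact Or.inl (sub_eq_zero.mp h)
  · exact Or.inr (eq_neg_of_add_eq_zero_left h)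

theorem eq_mul_of_kmem (hgda : IsGDA comp) (hX : ∀ t : ↥T, (X t : D) ∈ comp (t : G))
    (hXinv : ∀ t : ↥T, (((X t)⁻¹ : Dˣ) : D) ∈ comp (t : G)⁻¹) {u v t : ↥T} {b b' b'' : D}
    (ht : Kmem comp X t) (hb : (X u : D) * X t = b * (X t * X u))
    (hb' : (X v : D) * X t = b' * (X t * X v))
    (hb'' : (X (u * v) : D) * X t = b'' * (X t * X (u * v)))
    (hbc : ∀ a, Commute b a) (hb'c : ∀ a, Commute b' a) : b'' = b * b' := by
  obtain ⟨e, he, hXuv⟩ := exists_mem_one_X_mul_eq hgda hX hXinv u v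
  have h := mul_mul_eq_mul_mul_of_mul_eq_mul_mul hb hb' (ht e he).symm hbc hb'c
  rw [← hXuv, hb''] at h
  exact ((X t).isUnit.mul (X (u * v)).isUnit).mul_left_inj.mp h

theorem eq_algebraMap_of_not_kmem [Nontrivial D] (hgda : IsGDA comp)
    (hcomm : ∀ z ∈ comp (1 : G), ∀ w ∈ comp (1 : G), z * w = w * z)
    (h2 : ∀ t : ↥T, (t : G) * t = 1) (hX : ∀ t : ↥T, (X t : D) ∈ comp (t : G))
    (hXinv : ∀ t : ↥T, (((X t)⁻¹ : Dˣ) : D) ∈ comp (t : G)⁻¹)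
    {μ : ↥T → ℝ} (hμ : ∀ t : ↥T, μ t = 1 ∨ μ t = -1)
    (hXsq : ∀ t : ↥T, (X t : D) * (X t : D) = algebraMap ℝ D (μ t))
    {F : Type*} [FunLike F D D] [AddHomClass F D D] {φ : F}
    (hanti : ∀ x y : D, φ (x * y) = φ y * φ x) (hinvol : ∀ x : D, φ (φ x) = x)
    (hgr : ∀ (g : G), ∀ x ∈ comp g, φ x ∈ comp g)
    (hconj : ∀ z ∈ comp (1 : G),
      (∃ r : ℝ, z + φ z = algebraMap ℝ D r) ∧ ∃ r : ℝ, 0 ≤ r ∧ z * φ z = algebraMap ℝ D r)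
    {η : ↥T → ℝ} (hη : ∀ t : ↥T, η t = 1 ∨ η t = -1)
    (hφX : ∀ t : ↥T, φ (X t : D) = η t • (X t : D)) {u t : ↥T} {b : D}
    (hu : ¬Kmem comp X u) (ht : Kmem comp X t) (hb1 : b = 1 ∨ b = -1)
    (hb : (X u : D) * X t = b * (X t * X u)) :
    b = algebraMap ℝ D (μ (u * t) * μ u * μ t) ∧ b = algebraMap ℝ D (η (u * t) * η u * η t) := by
  obtain ⟨c, hc, rfl⟩ : ∃ c : ℝ, (c = 1 ∨ c = -1) ∧ b = algebraMap ℝ D c := by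
    rcases hb1 with rfl | rfl
    exacts [⟨1, Or.inl rfl, by simp⟩, ⟨-1, Or.inr rfl, by simp⟩]
  have hut := not_kmem_mul hgda hcomm hX hXinv (Subtype.ext (h2 t)) hu ht
  obtain ⟨d, hd, hxyz⟩ := hgda.exists_mem_one_mul_eq (x := X (u * t))
    (hgda.mul_mem (hX u) (hX t)) (hXinv (u * t))
  have hXd := hgda.mul_eq_apply_mul_of_not_commute hcomm φ (hgr 1) (fun z hz => (hconj z hz).1)
    (fun z hz => (hconj z hz).2.imp fun _ h => h.2) (hX (u * t)) (hXinv (u * t))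
    (by simpa [Kmem] using hut)
  obtain ⟨-, r, hr, hdr⟩ := hconj d hd
  refine ⟨congrArg _ ?_, congrArg _ ?_⟩
  · exact sign_eq_mul_mul_of_mul_self hb (hXsq u) (hXsq t) (hXsq (u * t)) hxyz (hXd d hd) hdr hr
      hc (hμ u) (hμ t) (hμ (u * t))
  · exact sign_eq_mul_mul_of_anti φ hanti hb (hφX u) (hφX t) (hφX (u * t)) hxyz
      (by rw [hXd _ (hgr 1 d hd), hinvol]) ((X u).isUnit.mul (X t).isUnit).ne_zero hc (hη u) (hη t)

end Normalized

theorem stmt_14_general (comp : G → Submodule ℝ D) (hgda : IsGDA comp)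
    -- `D_e ≅ ℂ`
    (hcomm : ∀ z ∈ comp (1 : G), ∀ w ∈ comp (1 : G), z * w = w * z)
    (T : Subgroup G)
    (h2 : ∀ t : ↥T, (t : G) * t = 1)
    (X : ↥T → Dˣ) (hX : ∀ t : ↥T, (X t : D) ∈ comp (t : G))
    (μ : ↥T → ℝ) (hμ : ∀ t : ↥T, μ t = 1 ∨ μ t = -1)
    (hXsq : ∀ t : ↥T, (X t : D) * (X t : D) = algebraMap ℝ D (μ t))
    (φ : D ≃ₗ[ℝ] D)
    (hanti : ∀ x y : D, φ (x * y) = φ y * φ x)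
    (hinvol : ∀ x : D, φ (φ x) = x)
    (hgr : ∀ (g : G), ∀ x ∈ comp g, φ x ∈ comp g)
    (hconj : ∀ z ∈ comp (1 : G),
      (∃ r : ℝ, z + φ z = algebraMap ℝ D r) ∧ ∃ r : ℝ, 0 ≤ r ∧ z * φ z = algebraMap ℝ D r)
    (η : ↥T → ℝ) (hη : ∀ t : ↥T, η t = 1 ∨ η t = -1)
    (hφX : ∀ t : ↥T, φ (X t : D) = η t • (X t : D))
    (δ : ℝ)
    (hKη : ∀ t : ↥T, Kmem comp X t → η t = δ)
    -- `K ≠ T`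
    (hKproper : ∃ u : ↥T, ¬Kmem comp X u)
    (β : ↥T → ↥T → D)
    (hβ : ∀ u t : ↥T, Kmem comp X t →
      (X u : D) * (X t : D) = β u t * ((X t : D) * (X u : D))) :
    (∀ u t : ↥T, Kmem comp X t → (β u t = 1 ∨ β u t = -1)) ∧
    (∀ u v t : ↥T, Kmem comp X t → β (u * v) t = β u t * β v t) ∧
    (∀ u t : ↥T, ¬Kmem comp X u → Kmem comp X t →
      β u t = algebraMap ℝ D (μ (u * t) * μ u * μ t) ∧
        β u t = algebraMap ℝ D (η (u * t) * η u * δ)) ∧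
    ((∀ u : ↥T, ¬Kmem comp X u → η u = μ u) → ∀ t : ↥T, η t = μ t) := by
  have : Nontrivial D := by
    obtain ⟨u, hu⟩ := hKproper
    by_contra hD
    exact hu fun z _ => (not_nontrivial_iff_subsingleton.mp hD).elim _ _
  have hμ0 : ∀ t : ↥T, μ t ≠ 0 := fun t => by rcases hμ t with h | h <;> simp [h]
  have hXinv : ∀ t : ↥T, (((X t)⁻¹ : Dˣ) : D) ∈ comp (t : G)⁻¹ := fun t => by
    rw [inv_eq_of_mul_eq_one_right (h2 t)]
    exact Units.val_inv_mem_of_mul_self_eq_algebraMap (hX t) (hXsq t) (hμ0 t)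
  have hsign : ∀ u t : ↥T, Kmem comp X t → β u t = 1 ∨ β u t = -1 := fun u t ht =>
    eq_one_or_eq_neg_one_of_kmem hgda hX h2 hμ hXsq ht (hβ u t ht)
  have hβ_eq : ∀ u t : ↥T, ¬Kmem comp X u → Kmem comp X t →
      β u t = algebraMap ℝ D (μ (u * t) * μ u * μ t) ∧
        β u t = algebraMap ℝ D (η (u * t) * η u * δ) := fun u t hu ht =>
    hKη t ht ▸ eq_algebraMap_of_not_kmem hgda hcomm h2 hX hXinv hμ hXsq hanti hinvol hgr hconj hη
      hφX hu ht (hsign u t ht) (hβ u t ht)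
  refine ⟨hsign, fun u v t ht => ?_, hβ_eq, fun hημ t => ?_⟩
  · have hcentral : ∀ w a, Commute (β w t) a := fun w a =>
      (hsign w t ht).elim (fun h => h ▸ Commute.one_left a) fun h => h ▸ Commute.neg_one_left a
    exact eq_mul_of_kmem hgda hX hXinv ht (hβ u t ht) (hβ v t ht) (hβ (u * v) t ht)
      (hcentral u) (hcentral v)
  · by_cases ht : Kmem comp X t
    · obtain ⟨u, hu⟩ := hKproper
      have hut := not_kmem_mul hgda hcomm hX hXinv (Subtype.ext (h2 t)) hu ht
      have h := (algebraMap ℝ D).injective ((hβ_eq u t hu ht).1.symm.trans (hβ_eq u t hu ht).2)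
      rw [hημ _ hut, hημ u hu, ← hKη t ht] at h
      exact (mul_left_cancel₀ (mul_ne_zero (hμ0 _) (hμ0 u)) h).symm
    · exact hημ t ht

/-- Let `D` be a real graded division algebra with `D_e ≅ ℂ`, `K ≠ T`, elementary
2-group support `T`, normalized elements `X_t` with `X_t² = μ(t) ∈ {±1}`, and a
degree-preserving involution `φ₀` restricting to the conjugation on `D_e` with
`φ₀(X_t) = η(t) X_t` and `η = δ` on `K`. Extend `β` to `T × K` by
`X_u X_t = β(u,t) X_t X_u`. Then `β` takes values in `{±1}` on `T × K`, is
multiplicative in the first variable, and satisfies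
`β(u,t) = μ(ut)μ(u)μ(t) = η(ut)η(u)δ` for `u ∈ T ∖ K`, `t ∈ K`. In particular,
if `η` and `μ` coincide on `T ∖ K` then they coincide on all of `T`. -/
theorem stmt_14 (comp : G → Submodule ℝ D) (hgda : IsGDA comp)
    (hfd : FiniteDimensional ℝ ↥(comp (1 : G)))
    -- `D_e ≅ ℂ`
    (hcomm : ∀ z ∈ comp (1 : G), ∀ w ∈ comp (1 : G), z * w = w * z)
    (hrank : Module.finrank ℝ ↥(comp (1 : G)) = 2)
    (T : Subgroup G) (hT : ∀ g : G, comp g ≠ ⊥ ↔ g ∈ T)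
    (h2 : ∀ t : ↥T, (t : G) * t = 1)
    (X : ↥T → Dˣ) (hX : ∀ t : ↥T, (X t : D) ∈ comp (t : G))
    (μ : ↥T → ℝ) (hμ : ∀ t : ↥T, μ t = 1 ∨ μ t = -1)
    (hXsq : ∀ t : ↥T, (X t : D) * (X t : D) = algebraMap ℝ D (μ t))
    (φ : D ≃ₗ[ℝ] D)
    (hanti : ∀ x y : D, φ (x * y) = φ y * φ x)
    (hinvol : ∀ x : D, φ (φ x) = x)
    (hgr : ∀ (g : G), ∀ x ∈ comp g, φ x ∈ comp g)
    (hconj : ∀ z ∈ comp (1 : G),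
      (∃ r : ℝ, z + φ z = algebraMap ℝ D r) ∧ ∃ r : ℝ, 0 ≤ r ∧ z * φ z = algebraMap ℝ D r)
    (η : ↥T → ℝ) (hη : ∀ t : ↥T, η t = 1 ∨ η t = -1)
    (hφX : ∀ t : ↥T, φ (X t : D) = η t • (X t : D))
    (δ : ℝ) (hδ : δ = 1 ∨ δ = -1)
    (hKη : ∀ t : ↥T, Kmem comp X t → η t = δ)
    -- `K ≠ T`
    (hKproper : ∃ u : ↥T, ¬Kmem comp X u)
    (β : ↥T → ↥T → D)
    (hβ : ∀ u t : ↥T, Kmem comp X t →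
      (X u : D) * (X t : D) = β u t * ((X t : D) * (X u : D))) :
    (∀ u t : ↥T, Kmem comp X t → (β u t = 1 ∨ β u t = -1)) ∧
    (∀ u v t : ↥T, Kmem comp X t → β (u * v) t = β u t * β v t) ∧
    (∀ u t : ↥T, ¬Kmem comp X u → Kmem comp X t →
      β u t = algebraMap ℝ D (μ (u * t) * μ u * μ t) ∧
        β u t = algebraMap ℝ D (η (u * t) * η u * δ)) ∧
    ((∀ u : ↥T, ¬Kmem comp X u → η u = μ u) → ∀ t : ↥T, η t = μ t) :=
  stmt_14_general comp hgda hcomm T h2 X hX μ hμ hXsq φ hanti hinvol hgr hconj η hη hφX δ hKη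
    hKproper β hβ
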